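/- The function t ↦ [ (1+t²)·√(4+t²) + 3t + t³ ] / (2t(4+t²)) on (0,∞) attains its minimum at t = 2/√3, and its value there equals 27/32; equivalently, the minimizing abscissa of the curve is x(2/√3) = (3/4)·√(3/2), whose square is 27/32. -/

import Mathlib

/-!
Writing `s = √(4 + t²)`, the inequality `27/32 ≤ xsq t` is `t (60 + 11t²) / 16 ≤ (1 + t²) s`.
Both sides are nonnegative, and with `u = t²` the difference of their squares (times 256) is
`(3u - 4)² (15u + 64) ≥ 0`, which vanishes exactly at `t² = 4/3`. There `s = 2t`, and `xsq t`
collapses to `(5 + 3t²) / (2 (4 + t²)) = 27/32`.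
-/

noncomputable def xsq (t : ℝ) : ℝ :=
  ((1 + t ^ 2) * Real.sqrt (4 + t ^ 2) + 3 * t + t ^ 3) / (2 * t * (4 + t ^ 2))

lemma xsq_sub_eq {t : ℝ} (ht : 0 < t) :
    xsq t - 27 / 32 =
      ((1 + t ^ 2) * Real.sqrt (4 + t ^ 2) - t * (60 + 11 * t ^ 2) / 16) /
        (2 * t * (4 + t ^ 2)) := by
  rw [xsq, eq_div_iff (by positivity), sub_mul, div_mul_cancel₀ _ (by positivity)]
  ring

lemma mul_sixty_add_le_mul_sqrt {t : ℝ} (ht : 0 ≤ t) :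
    t * (60 + 11 * t ^ 2) / 16 ≤ (1 + t ^ 2) * Real.sqrt (4 + t ^ 2) := by
  have key : (t * (60 + 11 * t ^ 2) / 16) ^ 2 + (3 * t ^ 2 - 4) ^ 2 * (15 * t ^ 2 + 64) / 256 =
      (1 + t ^ 2) ^ 2 * (4 + t ^ 2) := by ring
  calc t * (60 + 11 * t ^ 2) / 16
      = Real.sqrt ((t * (60 + 11 * t ^ 2) / 16) ^ 2) := (Real.sqrt_sq (by positivity)).symm
    _ ≤ Real.sqrt ((1 + t ^ 2) ^ 2 * (4 + t ^ 2)) :=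
        Real.sqrt_le_sqrt (key ▸ le_add_of_nonneg_right (by positivity))
    _ = (1 + t ^ 2) * Real.sqrt (4 + t ^ 2) := by
        rw [Real.sqrt_mul (by positivity), Real.sqrt_sq (by positivity)]

lemma xsq_of_sq_eq {t : ℝ} (ht : 0 < t) (ht2 : t ^ 2 = 4 / 3) : xsq t = 27 / 32 := by
  have hs : Real.sqrt (4 + t ^ 2) = 2 * t := by
    rw [Real.sqrt_eq_iff_mul_self_eq_of_pos (by positivity)]
    linear_combination 3 * ht2
  rw [xsq, hs, div_eq_iff (by positivity)]
  linear_combination (-(27 / 16) * t + 3 * t) * ht2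

theorem xsq_min :
    xsq (2 / Real.sqrt 3) = 27 / 32 ∧
    (∀ t : ℝ, 0 < t → 27 / 32 ≤ xsq t) := by
  refine ⟨xsq_of_sq_eq (by positivity) ?_, fun t ht => ?_⟩
  · rw [div_pow, Real.sq_sqrt (by norm_num)]
    norm_num
  · rw [← sub_nonneg, xsq_sub_eq ht]
    exact div_nonneg (sub_nonneg.mpr (mul_sixty_add_le_mul_sqrt ht.le)) (by positivity)
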